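/- arXiv:1710.10303 — 13 statements merged into one kernel-verified Lean document; each statement's English description precedes it below -/
import Mathlib

section
/- For every positive integer n, the Fibonacci-sum graph G_n is bipartite (equivalently, G_n is 2-colorable, i.e., contains no odd cycle). -/
/-- Vertices of the Fibonacci-sum graph on `{1, 2, ..., n}`. -/
abbrev FibVert (n : ℕ) := {i : ℕ // 1 ≤ i ∧ i ≤ n}

/-- The Fibonacci-sum graph `G_n`: vertices `1, ..., n`, with distinct `i, j`
adjacent iff `i + j` is a Fibonacci number. -/
def fibSumGraph (n : ℕ) : SimpleGraph (FibVert n) where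
  Adj x y := x ≠ y ∧ ∃ m, Nat.fib m = x.val + y.val
  symm := by
    constructor
    rintro x y ⟨hxy, m, hm⟩
    exact ⟨hxy.symm, m, by omega⟩
  loopless := by
    constructor
    rintro x ⟨hxx, -⟩
    exact hxx rfl

/-!
Every `x ≥ 2` is adjacent to its reflection `fib k - x` in the least Fibonacci number
`fib k > x`, and this reflection lies in `(0, x)`. These edges form a spanning tree of the
positive integers; colour by the parity of depth in it. For any other edge `i < j` with
`i + j = fib k` one has `j < fib (k - 1)`, and reflecting both endpoints in `fib (k - 1)` gives
an edge with sum `fib (k - 3)` whose larger endpoint is below `j`, so induction on `j` applies.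
-/

namespace Nat

lemma greatestFib_eq_of_fib_le_of_lt {m x : ℕ} (h₁ : fib m ≤ x) (h₂ : x < fib (m + 1)) :
    greatestFib x = m :=
  le_antisymm (Nat.lt_succ_iff.mp (greatestFib_lt.2 h₂)) (le_greatestFib.2 h₁)

def fibReflect (x : ℕ) : ℕ := fib (greatestFib x + 1) - x

lemma fibReflect_of_fib_le_of_lt {m x : ℕ} (h₁ : fib m ≤ x) (h₂ : x < fib (m + 1)) :
    fibReflect x = fib (m + 1) - x := by
  rw [fibReflect, greatestFib_eq_of_fib_le_of_lt h₁ h₂]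

lemma fibReflect_lt {x : ℕ} (hx : 2 ≤ x) : fibReflect x < x := by
  obtain ⟨a, ha⟩ := Nat.exists_eq_add_of_le' (le_greatestFib.2 (show fib 3 ≤ x from hx))
  have hle : fib (a + 3) ≤ x := ha ▸ fib_greatestFib_le x
  have hlt : fib (a + 2) < fib (a + 3) := fib_lt_fib_succ (by omega)
  have hsum : fib (a + 4) = fib (a + 2) + fib (a + 3) := fib_add_two
  have hrx : fibReflect x = fib (a + 4) - x := by rw [fibReflect, ha]
  omega

def fibColor (x : ℕ) : Bool :=
  if hx : 2 ≤ x then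
    have := fibReflect_lt hx
    (!fibColor (fibReflect x))
  else false
termination_by x

lemma fibColor_of_two_le {x : ℕ} (hx : 2 ≤ x) : fibColor x = !fibColor (fibReflect x) := by
  rw [fibColor, dif_pos hx]

def IsFibSumPair (i j : ℕ) : Prop := 1 ≤ i ∧ i < j ∧ ∃ k, i + j = fib k

lemma IsFibSumPair.fibReflect_eq_or_isFibSumPair {i j : ℕ} (h : IsFibSumPair i j) :
    fibReflect j = i ∨
      (2 ≤ i ∧ fibReflect i < j ∧ IsFibSumPair (fibReflect j) (fibReflect i)) := by
  obtain ⟨hi, hij, k, hk⟩ := h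
  have hk₃ : 3 ≤ k := by
    by_contra! hk₃
    have : fib k ≤ fib 2 := fib_mono (by omega)
    rw [fib_two] at this
    omega
  obtain ⟨a, rfl⟩ := Nat.exists_eq_add_of_le' hk₃
  have h₁ : fib (a + 3) = fib (a + 1) + fib (a + 2) := fib_add_two
  have h₂ : fib (a + 2) = fib a + fib (a + 1) := fib_add_two
  have h₃ : fib a ≤ fib (a + 1) := fib_le_fib_succ
  have hj₁ : fib (a + 1) ≤ j := by omega
  have hj₃ : j < fib (a + 3) := by omega
  by_cases hj₂ : fib (a + 2) ≤ j
  · left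
    have hrj : fibReflect j = fib (a + 3) - j := fibReflect_of_fib_le_of_lt hj₂ hj₃
    omega
  · right
    -- now `j` and `i = fib (a + 1) + fibReflect j` both lie in `[fib (a + 1), fib (a + 2))`
    have hrj : fibReflect j = fib (a + 2) - j := fibReflect_of_fib_le_of_lt hj₁ (not_le.1 hj₂)
    have hi₁ : fib (a + 1) ≤ i := by omega
    have hi₂ : i < fib (a + 2) := by omega
    have hri : fibReflect i = fib (a + 2) - i := fibReflect_of_fib_le_of_lt hi₁ hi₂
    have hfa : 1 ≤ fib (a + 1) := fib_pos.2 (by omega)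
    exact ⟨by omega, by omega, by omega, by omega, a, by omega⟩

lemma IsFibSumPair.fibColor_ne {i j : ℕ} (h : IsFibSumPair i j) : fibColor i ≠ fibColor j := by
  induction j using Nat.strong_induction_on generalizing i with
  | _ j ih =>
  rw [fibColor_of_two_le (show 2 ≤ j by obtain ⟨hi, hij, -⟩ := h; omega)]
  rcases h.fibReflect_eq_or_isFibSumPair with hj | ⟨hi₂, hlt, hreflect⟩
  · rw [hj]
    cases fibColor i <;> decide
  · rw [fibColor_of_two_le hi₂]
    exact fun heq => ih _ hlt hreflect (Bool.not_inj heq).symm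

end Nat

theorem fibSumGraph_bipartite_general (n : ℕ) :
    (fibSumGraph n).Colorable 2 := by
  refine (SimpleGraph.Coloring.mk (fun v => Nat.fibColor v.val) ?_).colorable
  rintro x y ⟨hxy, m, hm⟩
  rcases (Subtype.val_injective.ne hxy).lt_or_gt with h | h
  · exact Nat.IsFibSumPair.fibColor_ne ⟨x.2.1, h, m, hm.symm⟩
  · exact (Nat.IsFibSumPair.fibColor_ne ⟨y.2.1, h, m, by omega⟩).symm

/-- For every positive integer n, the Fibonacci-sum graph G_n is bipartite
(equivalently, 2-colorable). -/
theorem fibSumGraph_bipartite (n : ℕ) (hn : 1 ≤ n) :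
    (fibSumGraph n).Colorable 2 :=
  fibSumGraph_bipartite_general n
end

section
/- For every positive integer n, the Fibonacci-sum graph G_n is connected. -/
/- Every vertex `i ≥ 2` has a smaller neighbour `fib m - i`, where `fib m` is a Fibonacci number
in the open interval `(i, 2i)`: if `fib g ≤ i < fib (g + 1)` with `g ≥ 3`, then
`fib (g + 1) = fib (g - 1) + fib g < 2 * fib g ≤ 2 * i`. Descending along these neighbours
joins every vertex to `1`. -/

theorem SimpleGraph.reachable_of_exists_adj_lt {V : Type*} (G : SimpleGraph V) (f : V → ℕ) (r : V)
    (h : ∀ v, v ≠ r → ∃ w, G.Adj v w ∧ f w < f v) (v : V) : G.Reachable v r := by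
  induction hv : f v using Nat.strong_induction_on generalizing v with
  | _ k ih =>
    by_cases hvr : v = r
    · exact hvr ▸ SimpleGraph.Reachable.refl v
    · obtain ⟨w, hvw, hwv⟩ := h v hvr
      exact hvw.reachable.trans (ih (f w) (hv ▸ hwv) w rfl)

theorem Nat.exists_lt_fib_lt_two_mul {i : ℕ} (hi : 2 ≤ i) :
    ∃ m, i < fib m ∧ fib m < 2 * i := by
  set g := greatestFib i
  have hfib_le : fib g ≤ i := fib_greatestFib_le i
  have hg : 3 ≤ g := le_greatestFib.mpr hi
  have hfib_succ : fib (g + 1) = fib (g - 1) + fib g := fib_add_one (by omega)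
  have hfib_pred : fib (g - 1) < fib g := (fib_lt_fib (by omega)).mpr (by omega)
  exact ⟨g + 1, lt_fib_greatestFib_add_one i, by omega⟩

theorem fibSumGraph_exists_adj_lt {n : ℕ} (x : FibVert n) (hx : 2 ≤ x.val) :
    ∃ y, (fibSumGraph n).Adj x y ∧ y.val < x.val := by
  obtain ⟨m, hlt, hgt⟩ := Nat.exists_lt_fib_lt_two_mul hx
  refine ⟨⟨Nat.fib m - x.val, by omega, by omega⟩, ⟨Subtype.coe_ne_coe.mp ?_, m, ?_⟩, ?_⟩ <;>
    dsimp only <;> omega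

/-- For every positive integer n, the Fibonacci-sum graph G_n is connected. -/
theorem fibSumGraph_connected (n : ℕ) (hn : 1 ≤ n) :
    (fibSumGraph n).Connected := by
  let one : FibVert n := ⟨1, le_rfl, hn⟩
  have reach_one := (fibSumGraph n).reachable_of_exists_adj_lt Subtype.val one fun x hx =>
    fibSumGraph_exists_adj_lt x <| by
      have : x.val ≠ 1 := fun h => hx (Subtype.ext h)
      omega
  have : Nonempty (FibVert n) := ⟨one⟩
  exact ⟨fun x y => (reach_one x).trans (reach_one y).symm⟩
end

section
/- Let n ≥ 2 and let k be such that F_k ≤ n < F_{k+1}. In the Fibonacci-sum graph G_n, if n ≤ F_{k+2}/2 then the vertex n is adjacent to exactly one vertex, namely F_{k+1} − n; and if n > F_{k+2}/2 then the vertex n is adjacent to exactly two vertices, namely F_{k+1} − n and F_{k+2} − n. -/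
/-!
A neighbour `y` of the largest vertex `n` satisfies `n < n + y < 2 * n`. Since
`F_k ≤ n < F_{k+1}` and `2 * F_{k+1} ≤ F_{k+3}`, the only Fibonacci numbers in that range
are `F_{k+1}` and `F_{k+2}`. Conversely `F_{k+1} < 2 * n` once `n ≥ 2`, so `F_{k+1} - n` is
always a neighbour, while `F_{k+2} - n` is one exactly when `F_{k+2} < 2 * n`.
-/

namespace Nat

theorem fib_succ_lt_two_mul {n k : ℕ} (hn : 2 ≤ n) (h1 : fib k ≤ n) (h2 : n < fib (k + 1)) :
    fib (k + 1) < 2 * n := by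
  have hk : 3 < k + 1 := fib_mono.reflect_lt (hn.trans_lt h2 : fib 3 < fib (k + 1))
  obtain ⟨j, rfl⟩ : ∃ j, k = j + 2 := ⟨k - 2, by omega⟩
  have hrec : fib (j + 2 + 1) = fib (j + 1) + fib (j + 2) := fib_add_two
  have hlt : fib (j + 1) < fib (j + 2) := fib_lt_fib_succ (by omega)
  omega

theorem eq_add_one_or_eq_add_two_of_fib_mem {n k m : ℕ} (h1 : fib k ≤ n) (h2 : n < fib (k + 1))
    (hlo : n < fib m) (hhi : fib m < 2 * n) : m = k + 1 ∨ m = k + 2 := by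
  have hkm : k < m := fib_mono.reflect_lt (h1.trans_lt hlo)
  have hrec : fib (k + 3) = fib (k + 1) + fib (k + 2) := fib_add_two
  have hle : fib (k + 1) ≤ fib (k + 2) := fib_le_fib_succ
  have hmk : m < k + 3 := fib_mono.reflect_lt (by omega)
  omega

end Nat

open Nat

theorem fibSumGraph_adj_iff {n : ℕ} {x y : FibVert n} :
    (fibSumGraph n).Adj x y ↔ x.val ≠ y.val ∧ ∃ m, fib m = x.val + y.val :=
  and_congr_left' Subtype.coe_ne_coe.symm

theorem fibSumGraph_adj_last_iff {n k : ℕ} (hn : 2 ≤ n) (h1 : fib k ≤ n)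
    (h2 : n < fib (k + 1)) (y : FibVert n) :
    (fibSumGraph n).Adj ⟨n, by omega, le_rfl⟩ y ↔
      y.val = fib (k + 1) - n ∨ (fib (k + 2) < 2 * n ∧ y.val = fib (k + 2) - n) := by
  obtain ⟨y, hy1, hy2⟩ := y
  rw [fibSumGraph_adj_iff]
  dsimp only
  have hlt := fib_succ_lt_two_mul hn h1 h2
  have hle : fib (k + 1) ≤ fib (k + 2) := fib_le_fib_succ
  constructor
  · rintro ⟨hne, m, hm⟩
    obtain rfl | rfl := eq_add_one_or_eq_add_two_of_fib_mem h1 h2 (m := m) (by omega) (by omega)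
    · omega
    · omega
  · rintro (hy | ⟨hlt2, hy⟩)
    · exact ⟨by omega, k + 1, by omega⟩
    · exact ⟨by omega, k + 2, by omega⟩

/-- Let n ≥ 2 and F_k ≤ n < F_{k+1}.  If n ≤ F_{k+2}/2 then in G_n the vertex n is
adjacent to exactly one vertex, namely F_{k+1} - n; if n > F_{k+2}/2 then it is
adjacent to exactly two vertices, namely F_{k+1} - n and F_{k+2} - n. -/
theorem fibSumGraph_last_vertex_nbrs (n k : ℕ) (hn : 2 ≤ n)
    (h1 : Nat.fib k ≤ n) (h2 : n < Nat.fib (k + 1)) :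
    (2 * n ≤ Nat.fib (k + 2) →
      (∃ y : FibVert n, y.val = Nat.fib (k + 1) - n) ∧
      ∀ y : FibVert n,
        (fibSumGraph n).Adj ⟨n, by omega⟩ y ↔ y.val = Nat.fib (k + 1) - n) ∧
    (Nat.fib (k + 2) < 2 * n →
      (∃ y : FibVert n, y.val = Nat.fib (k + 1) - n) ∧
      (∃ y : FibVert n, y.val = Nat.fib (k + 2) - n) ∧
      ∀ y : FibVert n,
        (fibSumGraph n).Adj ⟨n, by omega⟩ y ↔
          (y.val = Nat.fib (k + 1) - n ∨ y.val = Nat.fib (k + 2) - n)) := by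
  have hlt := fib_succ_lt_two_mul hn h1 h2
  have hle : fib (k + 1) ≤ fib (k + 2) := fib_le_fib_succ
  have hadj := fibSumGraph_adj_last_iff hn h1 h2
  constructor
  · intro hsmall
    refine ⟨⟨⟨fib (k + 1) - n, by omega, by omega⟩, rfl⟩, fun y => ?_⟩
    simp only [hadj, not_lt.mpr hsmall, false_and, or_false]
  · intro hbig
    refine ⟨⟨⟨fib (k + 1) - n, by omega, by omega⟩, rfl⟩,
      ⟨⟨fib (k + 2) - n, by omega, by omega⟩, rfl⟩, fun y => ?_⟩
    simp only [hadj, hbig, true_and]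
end

section
/- Let n ≥ 2 and let k be such that F_k ≤ n < F_{k+1}. Then in the Fibonacci-sum graph G_n, the vertex F_k is adjacent to exactly one vertex, namely F_{k-1}. -/
/-! If `F_k + y = F_m` with `0 < y < F_{k+1}`, then `F_k < F_m < F_{k+2}`, which forces
`m = k + 1` and hence `y = F_{k-1}`. In `G_n` with `n < F_{k+1}` every neighbour `y` of `F_k`
satisfies these bounds, so `F_{k-1}` is its only neighbour. -/

theorem Nat.eq_fib_sub_one_of_fib_add_eq_fib {k m y : ℕ} (hk : k ≠ 0) (hy : 0 < y)
    (hy' : y < fib (k + 1)) (hm : fib k + y = fib m) : y = fib (k - 1) := by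
  have hrec := fib_add_one hk
  have hkm : k < m := fib_mono.reflect_lt (by omega)
  have hmk : m < k + 2 := fib_mono.reflect_lt (by rw [fib_add_two]; omega)
  obtain rfl : m = k + 1 := by omega
  omega

theorem fibSumGraph_adj_iff_of_val_eq_fib {n k : ℕ} (hk : 3 ≤ k) (hn : n < Nat.fib (k + 1))
    {x y : FibVert n} (hx : x.val = Nat.fib k) :
    (fibSumGraph n).Adj x y ↔ y.val = Nat.fib (k - 1) := by
  have hrec := Nat.fib_add_one (n := k) (by omega)
  have hlt : Nat.fib (k - 1) < Nat.fib k := (Nat.fib_lt_fib (by omega)).2 (by omega)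
  constructor
  · rintro ⟨-, m, hm⟩
    exact Nat.eq_fib_sub_one_of_fib_add_eq_fib (by omega) y.2.1 (by omega) (hx ▸ hm.symm)
  · intro hy
    exact ⟨Subtype.coe_ne_coe.1 (by omega), k + 1, by omega⟩

/-- Let n ≥ 2 and F_k ≤ n < F_{k+1}.  Then in G_n the vertex F_k is adjacent to
exactly one vertex, namely F_{k-1}. -/
theorem fibSumGraph_pendant_fib (n k : ℕ) (hn : 2 ≤ n)
    (h1 : Nat.fib k ≤ n) (h2 : n < Nat.fib (k + 1))
    (x : FibVert n) (hx : x.val = Nat.fib k) :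
    (∃ y : FibVert n, y.val = Nat.fib (k - 1)) ∧
    ∀ y : FibVert n, (fibSumGraph n).Adj x y ↔ y.val = Nat.fib (k - 1) := by
  have hk : 3 ≤ k := by
    have hfib3 : Nat.fib 3 = 2 := rfl
    have : 3 < k + 1 := Nat.fib_mono.reflect_lt (by omega)
    omega
  refine ⟨⟨⟨Nat.fib (k - 1), Nat.fib_pos.2 (by omega), (Nat.fib_mono (by omega)).trans h1⟩, rfl⟩,
    fun y => fibSumGraph_adj_iff_of_val_eq_fib hk h2 hx⟩
end

section
/- Let n ≥ 1 and let x ∈ {1, ..., n}. Let k ≥ 2 satisfy F_k ≤ x < F_{k+1} and let ℓ ≥ k satisfy F_ℓ ≤ x + n < F_{ℓ+1}. Then the degree of x in the Fibonacci-sum graph G_n equals ℓ − k if 2x is not a Fibonacci number, and equals ℓ − k − 1 if 2x is a Fibonacci number. -/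
/-!
The neighbours `y` of `x` correspond, via `y ↦ x + y`, to the Fibonacci numbers in the interval
`(x, x + n]` other than `2x`. Fibonacci numbers `> 1` have a unique index, so the Fibonacci numbers
in `(x, x + n]` are exactly `F_{k+1}, ..., F_ℓ`, which are `ℓ - k` distinct numbers; and `2x`, if it
is a Fibonacci number, is one of them.
-/

namespace Nat

theorem lt_fib_iff {a k m : ℕ} (hk : fib k ≤ a) (hk' : a < fib (k + 1)) :
    a < fib m ↔ k < m := by
  constructor
  · intro h
    by_contra! hmk
    have := fib_mono hmk
    omega
  · intro h
    exact hk'.trans_le (fib_mono h)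

theorem fib_le_iff {b l m : ℕ} (hl : fib l ≤ b) (hl' : b < fib (l + 1)) :
    fib m ≤ b ↔ m ≤ l := by
  constructor
  · intro h
    by_contra! hlm
    have := fib_mono (show l + 1 ≤ m from hlm)
    omega
  · intro h
    exact (fib_mono h).trans hl

theorem range_fib_inter_Ioc {a b k l : ℕ} (hk : fib k ≤ a) (hk' : a < fib (k + 1))
    (hl : fib l ≤ b) (hl' : b < fib (l + 1)) :
    Set.range fib ∩ Set.Ioc a b = fib '' Set.Ioc k l := by
  ext s
  constructor
  · rintro ⟨⟨m, rfl⟩, ha, hb⟩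
    exact ⟨m, ⟨(lt_fib_iff hk hk').1 ha, (fib_le_iff hl hl').1 hb⟩, rfl⟩
  · rintro ⟨m, ⟨hkm, hml⟩, rfl⟩
    exact ⟨⟨m, rfl⟩, (lt_fib_iff hk hk').2 hkm, (fib_le_iff hl hl').2 hml⟩

theorem ncard_range_fib_inter_Ioc {a b k l : ℕ} (hk₂ : 2 ≤ k) (hk : fib k ≤ a)
    (hk' : a < fib (k + 1)) (hl : fib l ≤ b) (hl' : b < fib (l + 1)) :
    (Set.range fib ∩ Set.Ioc a b).ncard = l - k := by
  have hinj : Set.InjOn fib (Set.Ioc k l) :=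
    fib_strictMonoOn.injOn.mono fun m hm => hk₂.trans hm.1.le
  rw [range_fib_inter_Ioc hk hk' hl hl', hinj.ncard_image, Set.ncard_Ioc_nat]

end Nat

theorem fibSumGraph.ncard_neighborSet (n : ℕ) (x : FibVert n) :
    ((fibSumGraph n).neighborSet x).ncard =
      ((Set.range Nat.fib ∩ Set.Ioc x.val (x.val + n)) \ {2 * x.val}).ncard := by
  have himage : (fun y : FibVert n => x.val + y.val) '' (fibSumGraph n).neighborSet x =
      (Set.range Nat.fib ∩ Set.Ioc x.val (x.val + n)) \ {2 * x.val} := by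
    have hx : 1 ≤ x.val ∧ x.val ≤ n := x.2
    ext s
    constructor
    · rintro ⟨y, ⟨hne, m, hm⟩, rfl⟩
      have hy : 1 ≤ y.val ∧ y.val ≤ n := y.2
      have hyx : y.val ≠ x.val := fun h => hne (Subtype.ext h.symm)
      refine ⟨⟨⟨m, hm⟩, ?_, ?_⟩, ?_⟩ <;> simp only [Set.mem_singleton_iff] <;> omega
    · rintro ⟨⟨⟨m, hm⟩, hxs, hsn⟩, hs⟩
      have hs : s ≠ 2 * x.val := hs
      refine ⟨⟨s - x.val, by omega, by omega⟩, ⟨Subtype.coe_ne_coe.1 ?_, m, ?_⟩, ?_⟩ <;>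
        dsimp only <;> omega
  rw [← himage,
    Set.ncard_image_of_injective _ fun y z h => Subtype.ext (add_left_cancel h)]

theorem fibSumGraph_degree_formula_general (n : ℕ) (x : FibVert n)
    (k l : ℕ) (hk : 2 ≤ k)
    (hx1 : Nat.fib k ≤ x.val) (hx2 : x.val < Nat.fib (k + 1))
    (hl1 : Nat.fib l ≤ x.val + n) (hl2 : x.val + n < Nat.fib (l + 1)) :
    ((∃ m, Nat.fib m = 2 * x.val) →
      ((fibSumGraph n).neighborSet x).ncard = l - k - 1) ∧
    (¬ (∃ m, Nat.fib m = 2 * x.val) →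
      ((fibSumGraph n).neighborSet x).ncard = l - k) := by
  have hcount := Nat.ncard_range_fib_inter_Ioc hk hx1 hx2 hl1 hl2
  have hx : 1 ≤ x.val ∧ x.val ≤ n := x.2
  rw [fibSumGraph.ncard_neighborSet]
  refine ⟨fun hfib => ?_, fun hfib => ?_⟩
  · have hmem : 2 * x.val ∈ Set.range Nat.fib ∩ Set.Ioc x.val (x.val + n) :=
      ⟨hfib, by omega, by omega⟩
    rw [Set.ncard_sdiff_singleton_of_mem hmem, hcount]
  · rw [Set.sdiff_singleton_eq_self fun h => hfib h.1, hcount]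

/-- Degree formula for a vertex x of G_n: with F_k ≤ x < F_{k+1} (k ≥ 2) and
F_ℓ ≤ x + n < F_{ℓ+1} (ℓ ≥ k), the degree of x is ℓ - k if 2x is not a
Fibonacci number, and ℓ - k - 1 if 2x is a Fibonacci number. -/
theorem fibSumGraph_degree_formula (n : ℕ) (hn : 1 ≤ n) (x : FibVert n)
    (k l : ℕ) (hk : 2 ≤ k) (hkl : k ≤ l)
    (hx1 : Nat.fib k ≤ x.val) (hx2 : x.val < Nat.fib (k + 1))
    (hl1 : Nat.fib l ≤ x.val + n) (hl2 : x.val + n < Nat.fib (l + 1)) :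
    ((∃ m, Nat.fib m = 2 * x.val) →
      ((fibSumGraph n).neighborSet x).ncard = l - k - 1) ∧
    (¬ (∃ m, Nat.fib m = 2 * x.val) →
      ((fibSumGraph n).neighborSet x).ncard = l - k) :=
  fibSumGraph_degree_formula_general n x k l hk hx1 hx2 hl1 hl2
end

section
/- For every positive integer p there exists a positive integer n such that the Fibonacci-sum graph G_n has exactly p vertices of degree 1; in fact, for n = F_{6p+1} + p − 1, the vertices of degree 1 in G_n are exactly F_{6p+1}, F_{6p+1} + 1, ..., F_{6p+1} + p − 1. -/
/-!
For `F = F_N` with `N = 6p + 1` and `n = F + p - 1`, a vertex `x ≥ F` has the single neighbour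
`F_{N+1} - x`: every sum `x + y` lies strictly between `F_N` and `F_{N+2}`. A vertex `x < F` with
`F_k ≤ x < F_{k+1}` has the two neighbours `F_{k+1} - x` and `F_{k+2} - x`, unless `F_{k+2} = 2x`;
then `F_{k+2}` is even, so `3 ∣ k + 2`, and since `N ≡ 1 (mod 3)` the index `k + 3` is still at
most `N`, so `F_{k+3} - x` serves instead. The vertex `1` has the neighbours `2` and `4`.
-/

open Nat

lemma Nat.three_dvd_of_two_dvd_fib {m : ℕ} (h : 2 ∣ fib m) : 3 ∣ m := by
  have hgcd : fib (gcd 3 m) = 2 := by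
    rw [fib_gcd]
    exact Nat.gcd_eq_left h
  rcases (Nat.dvd_prime Nat.prime_three).1 (Nat.gcd_dvd_left 3 m) with h1 | h3
  · simp [h1] at hgcd
  · exact h3 ▸ Nat.gcd_dvd_right 3 m

lemma Nat.fib_add_one_lt_two_mul_fib {k : ℕ} (hk : 3 ≤ k) : fib (k + 1) < 2 * fib k := by
  have hrec : fib (k + 1) = fib (k - 1) + fib k := fib_add_one (by omega)
  have hlt : fib (k - 1) < fib (k - 1 + 1) := fib_lt_fib_succ (by omega)
  rw [Nat.sub_add_cancel (by omega)] at hlt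
  omega

/-- The neighbourhood of `x` in `G_n`, as a set of natural numbers. -/
def fibSumNeighbors (n x : ℕ) : Set ℕ :=
  {y | y ∈ Set.Icc 1 n ∧ y ≠ x ∧ ∃ m, fib m = x + y}

lemma image_val_neighborSet_fibSumGraph {n : ℕ} (x : FibVert n) :
    Subtype.val '' (fibSumGraph n).neighborSet x = fibSumNeighbors n x := by
  ext y
  constructor
  · rintro ⟨y, ⟨hne, hfib⟩, rfl⟩
    exact ⟨y.2, fun h => hne (Subtype.ext h.symm), hfib⟩
  · rintro ⟨hy, hne, hfib⟩
    exact ⟨⟨y, hy⟩, ⟨fun h => hne (congrArg Subtype.val h).symm, hfib⟩, rfl⟩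

lemma ncard_neighborSet_fibSumGraph {n : ℕ} (x : FibVert n) :
    ((fibSumGraph n).neighborSet x).ncard = (fibSumNeighbors n x).ncard := by
  rw [← image_val_neighborSet_fibSumGraph, Set.ncard_image_of_injective _ Subtype.val_injective]

lemma fib_sub_mem_fibSumNeighbors {n x m : ℕ} (hx : x < fib m) (hmn : fib m ≤ n + x)
    (hm : fib m ≠ 2 * x) : fib m - x ∈ fibSumNeighbors n x :=
  ⟨⟨by omega, by omega⟩, by omega, m, by omega⟩

lemma fibSumNeighbors_eq_singleton {N n x : ℕ} (hN : 3 ≤ N) (hx : fib N ≤ x) (hxn : x ≤ n)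
    (hn : 2 * n < fib (N + 2)) : fibSumNeighbors n x = {fib (N + 1) - x} := by
  have hrec : fib (N + 2) = fib N + fib (N + 1) := fib_add_two
  have hsucc : fib (N + 1) < 2 * fib N := fib_add_one_lt_two_mul_fib hN
  ext y
  constructor
  · rintro ⟨⟨hy1, hyn⟩, -, m, hm⟩
    have hNm : N < m := (fib_lt_fib (by omega)).1 (by omega)
    have hmN : m < N + 2 := (fib_lt_fib (by omega)).1 (by omega)
    obtain rfl : m = N + 1 := by omega
    exact Set.mem_singleton_iff.2 (by omega)
  · rintro rfl
    exact fib_sub_mem_fibSumNeighbors (by omega) (by omega) (by omega)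

lemma exists_ne_mem_fibSumNeighbors {N n x : ℕ} (hN : N % 3 = 1) (hNn : fib N ≤ n) (hn : 4 ≤ n)
    (hx : 1 ≤ x) (hxN : x < fib N) :
    ∃ y₁ ∈ fibSumNeighbors n x, ∃ y₂ ∈ fibSumNeighbors n x, y₁ ≠ y₂ := by
  obtain rfl | hx2 := hx.eq_or_lt
  · have h4 : fib 4 = 3 := rfl
    have h5 : fib 5 = 5 := rfl
    exact ⟨_, fib_sub_mem_fibSumNeighbors (m := 4) (by omega) (by omega) (by omega),
      _, fib_sub_mem_fibSumNeighbors (m := 5) (by omega) (by omega) (by omega), by omega⟩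
  set k := greatestFib x
  have hkx : fib k ≤ x := fib_greatestFib_le x
  have hxk : x < fib (k + 1) := lt_fib_greatestFib_add_one x
  have hk3 : 3 ≤ k := le_greatestFib.2 (by rw [show fib 3 = 2 from rfl]; omega)
  have hkN : k < N := greatestFib_lt.2 hxN
  have hk1N : fib (k + 1) ≤ fib N := fib_mono hkN
  have hrec₂ : fib (k + 2) = fib k + fib (k + 1) := fib_add_two
  have hrec₃ : fib (k + 3) = fib (k + 1) + fib (k + 2) := fib_add_two
  have hlt₁₂ : fib (k + 1) < fib (k + 2) := fib_lt_fib_succ (by omega)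
  have hsucc : fib (k + 1) < 2 * fib k := fib_add_one_lt_two_mul_fib hk3
  refine ⟨fib (k + 1) - x, fib_sub_mem_fibSumNeighbors hxk (by omega) (by omega), ?_⟩
  by_cases hk2 : fib (k + 2) = 2 * x
  · have h3 : 3 ∣ k + 2 := three_dvd_of_two_dvd_fib ⟨x, hk2⟩
    have hk3N : fib (k + 3) ≤ fib N := fib_mono (by omega)
    exact ⟨fib (k + 3) - x, fib_sub_mem_fibSumNeighbors (by omega) (by omega) (by omega), by omega⟩
  · exact ⟨fib (k + 2) - x, fib_sub_mem_fibSumNeighbors (by omega) (by omega) hk2, by omega⟩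

lemma ncard_fibSumNeighbors_ne_one {N n x : ℕ} (hN : N % 3 = 1) (hNn : fib N ≤ n) (hn : 4 ≤ n)
    (hx : 1 ≤ x) (hxN : x < fib N) : (fibSumNeighbors n x).ncard ≠ 1 := by
  obtain ⟨y₁, hy₁, y₂, hy₂, hne⟩ := exists_ne_mem_fibSumNeighbors hN hNn hn hx hxN
  rw [Ne, Set.ncard_eq_one]
  rintro ⟨a, ha⟩
  rw [ha] at hy₁ hy₂
  exact hne (hy₁.trans hy₂.symm)

lemma ncard_setOf_le_val (n F : ℕ) (hF : 1 ≤ F) :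
    {x : FibVert n | F ≤ x.val}.ncard = n + 1 - F := by
  have himage : Subtype.val '' {x : FibVert n | F ≤ x.val} = Set.Icc F n := by
    ext m
    constructor
    · rintro ⟨x, hx, rfl⟩
      exact ⟨hx, x.2.2⟩
    · rintro ⟨hFm, hmn⟩
      exact ⟨⟨m, by omega, hmn⟩, hFm, rfl⟩
  rw [← Set.ncard_image_of_injective _ Subtype.val_injective, himage, Set.ncard_Icc_nat]

/-- For every p ≥ 1 there is an n with exactly p pendant vertices in G_n:
for n = F_{6p+1} + p - 1 the degree-1 vertices of G_n are exactly
F_{6p+1}, F_{6p+1} + 1, ..., F_{6p+1} + p - 1. -/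
theorem fibSumGraph_exactly_p_pendants (p : ℕ) (hp : 1 ≤ p) :
    ∃ n : ℕ, n = Nat.fib (6 * p + 1) + p - 1 ∧
      {x : FibVert n |
        ((fibSumGraph n).neighborSet x).ncard = 1}.ncard = p ∧
      ∀ x : FibVert n,
        ((fibSumGraph n).neighborSet x).ncard = 1 ↔
          Nat.fib (6 * p + 1) ≤ x.val := by
  set N := 6 * p + 1
  set n := fib N + p - 1
  have h13 : 13 ≤ fib N := (show fib 7 = 13 from rfl) ▸ fib_mono (by omega)
  have hp_lt : 2 * p < fib (N - 1) := by
    have : 6 * p ≤ fib (6 * p) := le_fib_self (by omega)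
    simp only [N, Nat.add_sub_cancel]
    omega
  have hN2 : fib (N + 2) = fib N + fib (N + 1) := fib_add_two
  have hN1 : fib (N + 1) = fib (N - 1) + fib N := fib_add_one (by omega)
  have pendant_iff : ∀ x : FibVert n,
      ((fibSumGraph n).neighborSet x).ncard = 1 ↔ fib N ≤ x.val := by
    intro x
    rw [ncard_neighborSet_fibSumGraph]
    constructor
    · intro h
      by_contra! hx
      exact ncard_fibSumNeighbors_ne_one (by omega) (by omega) (by omega) x.2.1 hx h
    · intro hx
      rw [fibSumNeighbors_eq_singleton (by omega) hx x.2.2 (by omega), Set.ncard_singleton]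
  refine ⟨n, rfl, ?_, pendant_iff⟩
  rw [show {x : FibVert n | _} = {x : FibVert n | fib N ≤ x.val} from Set.ext pendant_iff,
    ncard_setOf_le_val n _ (by omega)]
  omega
end

section
/- Let n ≥ 1 and let c : {1, ..., n} → {0, 1} be a proper 2-coloring of the Fibonacci-sum graph G_n (adjacent vertices receive different colors) with c(1) = 1. Then for every k ≥ 1: if F_{2k} ≤ n then c(F_{2k}) = 1; if F_{2k+1} ≤ n then c(F_{2k+1}) = 0; if F_{6k−3}/2 ≤ n then c(F_{6k−3}/2) = 1; and if F_{6k}/2 ≤ n then c(F_{6k}/2) = 0. -/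
/-!
Both families are reached from the vertex `1` by a path in `G_n` whose vertices only
increase, and a proper 2-colouring alternates along a path. For Fibonacci numbers the
path is `F_2 = 1, F_3, F_4, …`, since `F_m + F_{m+1} = F_{m+2}`. For the halves it is
`F_3/2 = 1, F_6/2, F_9/2, …`, since `F_{m+3}/2 + F_m/2 = F_{m+2}` whenever `F_m` is even.
Hence `c(F_m) = m + 1` and `c(F_{3j}/2) = j` in `Fin 2`.
-/

theorem Fin.two_eq_add_one_of_ne {a b : Fin 2} (h : a ≠ b) : b = a + 1 := by
  revert a b; decide

theorem Nat.fib_add_three (m : ℕ) : Nat.fib (m + 3) = 2 * Nat.fib (m + 1) + Nat.fib m := by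
  rw [Nat.fib_add_two (n := m + 1), Nat.fib_add_two (n := m)]; ring

theorem Nat.add_eq_fib_of_two_mul_eq_fib {x y m : ℕ} (hx : 2 * x = Nat.fib (m + 3))
    (hy : 2 * y = Nat.fib m) : x + y = Nat.fib (m + 2) := by
  rw [Nat.fib_add_three] at hx
  rw [Nat.fib_add_two]
  omega

namespace fibSumGraph

variable {n : ℕ} {c : FibVert n → Fin 2}

theorem color_eq_add_one_of_add_eq_fib (hc : ∀ x y, (fibSumGraph n).Adj x y → c x ≠ c y)
    (x : FibVert n) {v m : ℕ} (hv : 1 ≤ v) (hvx : v < x.val) (hsum : x.val + v = Nat.fib m) :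
    c x = c ⟨v, hv, hvx.le.trans x.2.2⟩ + 1 :=
  Fin.two_eq_add_one_of_ne
    (hc _ _ ⟨fun h => hvx.ne (congrArg Subtype.val h), m, hsum.symm.trans (add_comm _ _)⟩)

theorem eq_one_of_val_eq_one (hn : 1 ≤ n) {x : FibVert n} (hx : x.val = 1) :
    x = ⟨1, le_rfl, hn⟩ :=
  Subtype.ext hx

open Fin.NatCast

theorem color_fib (hn : 1 ≤ n) (hc : ∀ x y, (fibSumGraph n).Adj x y → c x ≠ c y)
    (h1 : c ⟨1, le_rfl, hn⟩ = 1) {m : ℕ} (hm : 2 ≤ m) (x : FibVert n) (hx : x.val = Nat.fib m) :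
    c x = ((m + 1 : ℕ) : Fin 2) := by
  induction m, hm using Nat.le_induction generalizing x with
  | base => rw [eq_one_of_val_eq_one hn hx, h1]; rfl
  | succ m hm ih =>
    have hlt : Nat.fib m < x.val := hx ▸ Nat.fib_lt_fib_succ hm
    have hsum : x.val + Nat.fib m = Nat.fib (m + 2) := by rw [hx, Nat.fib_add_two]; ring
    rw [color_eq_add_one_of_add_eq_fib hc x (Nat.fib_pos.mpr (by omega)) hlt hsum,
      ih _ rfl, Nat.cast_succ (m + 1)]

theorem color_half_fib_three_mul (hn : 1 ≤ n)
    (hc : ∀ x y, (fibSumGraph n).Adj x y → c x ≠ c y) (h1 : c ⟨1, le_rfl, hn⟩ = 1)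
    {j : ℕ} (hj : 1 ≤ j) (x : FibVert n) (hx : 2 * x.val = Nat.fib (3 * j)) : c x = (j : Fin 2) := by
  induction j, hj using Nat.le_induction generalizing x with
  | base => rw [eq_one_of_val_eq_one hn (x := x) (by simp [Nat.fib] at hx; omega), h1]; rfl
  | succ j hj ih =>
    obtain ⟨t, ht⟩ : 2 ∣ Nat.fib (3 * j) := Nat.fib_dvd 3 (3 * j) (dvd_mul_right 3 j)
    have hsum : x.val + t = Nat.fib (3 * j + 2) :=
      Nat.add_eq_fib_of_two_mul_eq_fib hx ht.symm
    have hpos : 0 < Nat.fib (3 * j) := Nat.fib_pos.mpr (by omega)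
    have hlt : t < x.val := by
      have := Nat.fib_pos.mpr (show 0 < 3 * j + 1 by omega)
      rw [mul_add, Nat.fib_add_three] at hx
      omega
    rw [color_eq_add_one_of_add_eq_fib hc x (by omega) hlt hsum, ih _ ht.symm, Nat.cast_succ]

end fibSumGraph

open fibSumGraph Fin.NatCast in
/-- Colors of Fibonacci numbers and of halves of even-indexed Fibonacci numbers
in any proper 2-coloring c of G_n with c(1) = 1. -/
theorem fibSumGraph_coloring_fib_values (n : ℕ) (hn : 1 ≤ n)
    (c : FibVert n → Fin 2)
    (hc : ∀ x y : FibVert n, (fibSumGraph n).Adj x y → c x ≠ c y)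
    (h1 : c ⟨1, by omega⟩ = 1) :
    ∀ k : ℕ, 1 ≤ k → ∀ x : FibVert n,
      (x.val = Nat.fib (2 * k) → c x = 1) ∧
      (x.val = Nat.fib (2 * k + 1) → c x = 0) ∧
      (2 * x.val = Nat.fib (6 * k - 3) → c x = 1) ∧
      (2 * x.val = Nat.fib (6 * k) → c x = 0) := by
  have two_mul_cast (k : ℕ) : ((2 * k : ℕ) : Fin 2) = 0 :=
    (CharP.cast_eq_zero_iff (Fin 2) 2 _).2 (dvd_mul_right 2 k)
  intro k hk x
  refine ⟨fun hx => ?_, fun hx => ?_, fun hx => ?_, fun hx => ?_⟩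
  · rw [color_fib hn hc h1 (by omega) x hx, Nat.cast_succ, two_mul_cast, zero_add]
  · rw [color_fib hn hc h1 (by omega) x hx, show 2 * k + 1 + 1 = 2 * (k + 1) by ring,
      two_mul_cast]
  · rw [color_half_fib_three_mul hn hc h1 (j := 2 * (k - 1) + 1) (by omega) x
      (by rwa [show 3 * (2 * (k - 1) + 1) = 6 * k - 3 by omega]), Nat.cast_succ, two_mul_cast,
      zero_add]
  · rw [color_half_fib_three_mul hn hc h1 (j := 2 * k) (by omega) x
      (by rwa [← mul_assoc]), two_mul_cast]
end

section
/- Let k ≥ 4 and let N satisfy F_k < N < F_{k+1}. Let c : {1, ..., N} → {0, 1} be a proper 2-coloring of the Fibonacci-sum graph G_N with c(1) = 1. If N ≠ F_{k+2}/2, then c(N) = c(N − F_k). If N = F_{k+2}/2, then c(N) = 1 when k ≡ 1 (mod 6) and c(N) = 0 when k ≡ 4 (mod 6). -/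
/-! `N` and `N - F_k` have the common neighbour `F_{k+1} - N`, their sums with it being `F_{k+1}`
and `F_{k-1}`; this neighbour coincides with `N - F_k` exactly when `2N = F_{k+2}`. In that case
`N - F_k = F_{k-1}/2` with `3 ∣ k - 1`, and the vertices `F_{3j}/2` alternate in colour because
`F_{3j}/2 + F_{3j+3}/2 = F_{3j+2}`; starting from `F_3/2 = 1` this fixes the colour of `N`. -/

open Nat Fin.NatCast

theorem Nat.even_fib_three_mul (j : ℕ) : Even (fib (3 * j)) :=
  even_iff_two_dvd.mpr (fib_dvd 3 (3 * j) (dvd_mul_right 3 j))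

namespace SimpleGraph.Coloring

variable {V : Type*} {G : SimpleGraph V} (C : G.Coloring (Fin 2)) {u v w : V}

theorem eq_add_one_of_adj (h : G.Adj u v) : C u = C v + 1 := by
  have := C.valid h
  generalize C u = a, C v = b at this ⊢
  revert a b
  decide

theorem eq_of_adj_of_adj (hu : G.Adj u w) (hv : G.Adj v w) : C u = C v := by
  rw [C.eq_add_one_of_adj hu, C.eq_add_one_of_adj hv]

end SimpleGraph.Coloring

theorem fibSumGraph_adj_of_add_eq_fib {n m : ℕ} {x y : FibVert n} (hxy : x.val ≠ y.val)
    (h : x.val + y.val = fib m) : (fibSumGraph n).Adj x y :=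
  ⟨fun e => hxy (congrArg Subtype.val e), m, h.symm⟩

section Coloring

variable {N : ℕ} (C : (fibSumGraph N).Coloring (Fin 2))

theorem fibSumGraph_color_eq_color_sub_fib {k : ℕ} (h1 : fib k < N) (h2 : N < fib (k + 1))
    (hne : 2 * N ≠ fib (k + 2)) {x y : FibVert N} (hx : x.val = N) (hy : y.val = N - fib k) :
    C x = C y := by
  have hk : k ≠ 0 := by
    rintro rfl
    simp only [fib_zero, zero_add, fib_one] at h1 h2
    omega
  have hF1 : fib (k + 1) = fib (k - 1) + fib k := fib_add_one hk
  have hF2 : fib (k + 2) = fib k + fib (k + 1) := fib_add_two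
  have hle : fib (k - 1) ≤ fib k := fib_mono (by omega)
  obtain ⟨p, hp⟩ : ∃ p : FibVert N, p.val = fib (k + 1) - N :=
    ⟨⟨_, by omega, by omega⟩, rfl⟩
  exact C.eq_of_adj_of_adj (w := p)
    (fibSumGraph_adj_of_add_eq_fib (m := k + 1) (by omega) (by omega))
    (fibSumGraph_adj_of_add_eq_fib (m := k - 1) (by omega) (by omega))

variable {C}

theorem fibSumGraph_color_half_fib_three_mul (hN : 1 ≤ N) (hone : C ⟨1, le_rfl, hN⟩ = 1)
    (j : ℕ) {v : FibVert N} (hv : 2 * v.val = fib (3 * j + 3)) : C v = (j : Fin 2) + 1 := by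
  induction j generalizing v with
  | zero =>
    have hv1 : v = ⟨1, le_rfl, hN⟩ := Subtype.ext (show v.val = 1 by
      rw [show fib (3 * 0 + 3) = 2 from rfl] at hv; omega)
    simpa [hv1] using hone
  | succ j ih =>
    rw [show 3 * (j + 1) + 3 = 3 * j + 6 by ring] at hv
    obtain ⟨t, ht⟩ := Nat.even_fib_three_mul (j + 1)
    rw [show 3 * (j + 1) = 3 * j + 3 by ring] at ht
    have hF5 : fib (3 * j + 5) = fib (3 * j + 3) + fib (3 * j + 4) := fib_add_two
    have hF6 : fib (3 * j + 6) = fib (3 * j + 4) + fib (3 * j + 5) := fib_add_two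
    have hF4 : 0 < fib (3 * j + 4) := fib_pos.mpr (by omega)
    have hF3 : 2 ≤ fib (3 * j + 3) := fib_mono (show 3 ≤ 3 * j + 3 by omega)
    obtain ⟨w, hw⟩ : ∃ w : FibVert N, w.val = t := ⟨⟨t, by omega, by omega⟩, rfl⟩
    have hvw : (fibSumGraph N).Adj v w := fibSumGraph_adj_of_add_eq_fib (m := 3 * j + 5)
      (by omega) (by omega)
    rw [C.eq_add_one_of_adj hvw, ih (by omega), Nat.cast_succ]

theorem fibSumGraph_color_of_two_mul_eq_fib (hN : 1 ≤ N) (hone : C ⟨1, le_rfl, hN⟩ = 1)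
    {j : ℕ} (h : 2 * N = fib (3 * j + 6)) {x : FibVert N} (hx : x.val = N) :
    C x = (j : Fin 2) := by
  have hF5 : fib (3 * j + 5) = fib (3 * j + 3) + fib (3 * j + 4) := fib_add_two
  have hF6 : fib (3 * j + 6) = fib (3 * j + 4) + fib (3 * j + 5) := fib_add_two
  have hF3 : 2 ≤ fib (3 * j + 3) := fib_mono (show 3 ≤ 3 * j + 3 by omega)
  have hF4 : 0 < fib (3 * j + 4) := fib_pos.mpr (by omega)
  obtain ⟨w, hw⟩ : ∃ w : FibVert N, w.val = N - fib (3 * j + 4) :=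
    ⟨⟨_, by omega, by omega⟩, rfl⟩
  have hxw : (fibSumGraph N).Adj x w := fibSumGraph_adj_of_add_eq_fib (m := 3 * j + 5)
    (by omega) (by omega)
  rw [C.eq_add_one_of_adj hxw, fibSumGraph_color_half_fib_three_mul hN hone j (by omega)]
  rw [add_assoc, show (1 : Fin 2) + 1 = 0 from rfl, add_zero]

end Coloring

/-- Recursion for the color of N in a proper 2-coloring of G_N with c(1) = 1,
where F_k < N < F_{k+1}, k ≥ 4. -/
theorem fibSumGraph_coloring_recursion (N k : ℕ)
    (h1 : Nat.fib k < N) (h2 : N < Nat.fib (k + 1))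
    (c : FibVert N → Fin 2)
    (hc : ∀ x y : FibVert N, (fibSumGraph N).Adj x y → c x ≠ c y)
    (hone : c ⟨1, by omega⟩ = 1) :
    (2 * N ≠ Nat.fib (k + 2) →
      ∀ x y : FibVert N, x.val = N → y.val = N - Nat.fib k → c x = c y) ∧
    (2 * N = Nat.fib (k + 2) →
      ∀ x : FibVert N, x.val = N →
        (k % 6 = 1 → c x = 1) ∧ (k % 6 = 4 → c x = 0)) := by
  let C : (fibSumGraph N).Coloring (Fin 2) := SimpleGraph.Coloring.mk c (hc _ _)
  refine ⟨fun hne x y hx hy => fibSumGraph_color_eq_color_sub_fib C h1 h2 hne hx hy,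
    fun hN x hx => ?_⟩
  have hk : k ≠ 1 := by
    rintro rfl
    simp only [fib_one, Nat.reduceAdd, fib_two] at h1 h2
    omega
  have hcolor (j : ℕ) (hj : k = 3 * j + 4) : c x = (j : Fin 2) :=
    fibSumGraph_color_of_two_mul_eq_fib (C := C) (by omega) hone (by rwa [hj] at hN) hx
  refine ⟨fun hk6 => ?_, fun hk6 => ?_⟩ <;> rw [hcolor (k / 3 - 1) (by omega)] <;> ext <;>
    simp only [Fin.val_natCast, Fin.val_one, Fin.val_zero] <;> omega
end

section
/- Let n ≥ 1 and let c : {1, ..., n} → {0, 1} be a proper 2-coloring of the Fibonacci-sum graph G_n with c(1) = 1. Define S(N) = (Σ_{i=1}^{N} c(i)) − N/2 as a rational number for 0 ≤ N ≤ n. Then for every k ≥ 3 with F_k ≤ n: S(F_k) = 0 if k ≡ 0 or 3 (mod 6); S(F_k) = 1/2 if k ≡ 2 or 4 (mod 6); and S(F_k) = −1/2 if k ≡ 1 or 5 (mod 6). -/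
/-- S(N) = (sum of the colors of 1, ..., N) - N/2, as a rational number. -/
def fibColorSum (c : ℕ → Fin 2) (N : ℕ) : ℚ :=
  (∑ i ∈ Finset.Icc 1 N, ((c i).val : ℚ)) - (N : ℚ) / 2

open Finset

theorem sum_Icc_one_add_of_reflect {M : Type*} [AddCommGroup M] (f : ℕ → M) {a b : ℕ}
    (ha : 0 < a) (hf : ∀ j ∈ Ico 1 a, f (a + b - j) = -f j) :
    ∑ i ∈ Icc 1 (a + b), f i =
      ∑ i ∈ Icc 1 b, f i - ∑ i ∈ Icc 1 a, f i + f a + f (a + b) := by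
  have top : ∑ i ∈ Ioc b (a + b), f i = f (a + b) - ∑ j ∈ Ico 1 a, f j := by
    have := sum_Ico_reflect f 0 (n := a + b) (m := a) (by omega)
    rw [show a + b + 1 - a = b + 1 by omega, Nat.sub_zero, Ico_add_one_add_one_eq_Ioc] at this
    rw [← this, Nat.Ico_zero_eq_range, sum_range_eq_add_Ico _ ha, Nat.sub_zero,
      sum_congr rfl hf, sum_neg_distrib, sub_eq_add_neg]
  have Icc_one : ∀ N, Icc 1 N = Ioc 0 N := Icc_add_one_left_eq_Ioc 0
  rw [Icc_eq_cons_Ico (b := a) ha, sum_cons, Icc_one, Icc_one,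
    ← sum_Ioc_consecutive f (Nat.zero_le b) (by omega), top]
  abel

def IsProperFibColoring (n : ℕ) (c : ℕ → Fin 2) : Prop :=
  ∀ x y : FibVert n, (fibSumGraph n).Adj x y → c x.val ≠ c y.val

def colorSign (c : ℕ → Fin 2) (i : ℕ) : ℚ := 2 * (c i : ℕ) - 1

def signedColorSum (c : ℕ → Fin 2) (N : ℕ) : ℚ := ∑ i ∈ Icc 1 N, colorSign c i

def fibSumPattern (k : ℕ) : ℚ :=
  match k % 6 with
  | 0 | 3 => 0
  | 2 | 4 => 1
  | _ => -1

theorem fibSumPattern_add_two (k : ℕ) :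
    fibSumPattern (k + 2) = fibSumPattern (k + 1) - fibSumPattern k + 2 * (-1) ^ k := by
  rw [neg_one_pow_eq_pow_mod_two, show k % 2 = k % 6 % 2 by omega]
  unfold fibSumPattern
  rw [show (k + 2) % 6 = (k % 6 + 2) % 6 by omega, show (k + 1) % 6 = (k % 6 + 1) % 6 by omega]
  have := Nat.mod_lt k (by norm_num : 6 > 0)
  interval_cases k % 6 <;> norm_num

theorem two_mul_fibColorSum (c : ℕ → Fin 2) (N : ℕ) :
    2 * fibColorSum c N = signedColorSum c N := by
  simp only [fibColorSum, signedColorSum, colorSign, sum_sub_distrib, ← mul_sum, sum_const,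
    Nat.card_Icc, add_tsub_cancel_right, nsmul_eq_mul, mul_one]
  ring

section
variable {n : ℕ} {c : ℕ → Fin 2}

theorem colorSign_eq_neg_of_fib_sum (hc : IsProperFibColoring n c) {i j m : ℕ} (hi : 1 ≤ i)
    (hin : i ≤ n) (hj : 1 ≤ j) (hjn : j ≤ n) (hij : i ≠ j) (hm : Nat.fib m = i + j) :
    colorSign c j = -colorSign c i := by
  have hne := hc ⟨i, hi, hin⟩ ⟨j, hj, hjn⟩ ⟨fun h => hij (congrArg Subtype.val h), m, hm⟩
  unfold colorSign
  generalize c i = x, c j = y at hne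
  fin_cases x <;> fin_cases y <;> simp at hne ⊢ <;> norm_num

theorem colorSign_fib (hc : IsProperFibColoring n c) (h1 : c 1 = 1) :
    ∀ k, 2 ≤ k → Nat.fib k ≤ n → colorSign c (Nat.fib k) = (-1) ^ k := by
  intro k hk
  induction k, hk using Nat.le_induction with
  | base => intro; norm_num [colorSign, h1]
  | succ k hk ih =>
    intro hkn
    have hlt := Nat.fib_lt_fib_succ hk
    have hpos : 0 < Nat.fib k := Nat.fib_pos.2 (by omega)
    rw [colorSign_eq_neg_of_fib_sum hc hpos (by omega) (by omega) hkn hlt.ne (Nat.fib_add_two),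
      ih (by omega), pow_succ]
    ring

theorem signedColorSum_fib_add_two (hc : IsProperFibColoring n c) {k : ℕ} (hk : 2 ≤ k)
    (hkn : Nat.fib (k + 2) ≤ n) :
    signedColorSum c (Nat.fib (k + 2)) = signedColorSum c (Nat.fib (k + 1)) -
      signedColorSum c (Nat.fib k) + colorSign c (Nat.fib k) + colorSign c (Nat.fib (k + 2)) := by
  have hlt := Nat.fib_lt_fib_succ hk
  have hpos : 0 < Nat.fib k := Nat.fib_pos.2 (by omega)
  rw [Nat.fib_add_two] at hkn ⊢
  refine sum_Icc_one_add_of_reflect _ hpos fun j hj => ?_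
  rw [mem_Ico] at hj
  exact colorSign_eq_neg_of_fib_sum hc (m := k + 2) (by omega) (by omega) (by omega) (by omega)
    (by omega) (by rw [Nat.fib_add_two]; omega)

theorem signedColorSum_fib (hc : IsProperFibColoring n c) (h1 : c 1 = 1) :
    ∀ k, 2 ≤ k → Nat.fib k ≤ n → signedColorSum c (Nat.fib k) = fibSumPattern k
  | 2, _, _ => by norm_num [signedColorSum, colorSign, h1, fibSumPattern]
  | 3, _, h3 => by
    have hσ₂ := colorSign_fib hc h1 2 le_rfl ((Nat.fib_mono (by norm_num)).trans h3)
    have hσ₃ := colorSign_fib hc h1 3 (by norm_num) h3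
    rw [show Nat.fib 2 = 1 from rfl] at hσ₂
    rw [show Nat.fib 3 = 2 from rfl] at hσ₃ ⊢
    rw [signedColorSum, sum_Icc_succ_top (by norm_num : 1 ≤ 1 + 1), Icc_self, sum_singleton,
      hσ₂, hσ₃]
    norm_num [fibSumPattern]
  | k + 4, _, hkn => by
    have hle₃ : Nat.fib (k + 3) ≤ Nat.fib (k + 4) := Nat.fib_mono (by omega)
    have hle₂ : Nat.fib (k + 2) ≤ Nat.fib (k + 3) := Nat.fib_mono (by omega)
    rw [signedColorSum_fib_add_two hc (k := k + 2) (by omega) hkn,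
      signedColorSum_fib hc h1 (k + 3) (by omega) (by omega),
      signedColorSum_fib hc h1 (k + 2) (by omega) (by omega),
      colorSign_fib hc h1 (k + 2) (by omega) (by omega), colorSign_fib hc h1 (k + 4) (by omega) hkn,
      fibSumPattern_add_two (k + 2)]
    ring

theorem fibColorSum_fib (hc : IsProperFibColoring n c) (h1 : c 1 = 1) {k : ℕ} (hk : 2 ≤ k)
    (hkn : Nat.fib k ≤ n) : fibColorSum c (Nat.fib k) = fibSumPattern k / 2 := by
  rw [← signedColorSum_fib hc h1 k hk hkn, ← two_mul_fibColorSum]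
  ring

end

theorem fibSumGraph_colorSum_fib_general (n : ℕ) (c : ℕ → Fin 2)
    (hc : ∀ x y : FibVert n, (fibSumGraph n).Adj x y → c x.val ≠ c y.val)
    (h1 : c 1 = 1) :
    ∀ k : ℕ, 3 ≤ k → Nat.fib k ≤ n →
      ((k % 6 = 0 ∨ k % 6 = 3) → fibColorSum c (Nat.fib k) = 0) ∧
      ((k % 6 = 2 ∨ k % 6 = 4) → fibColorSum c (Nat.fib k) = 1 / 2) ∧
      ((k % 6 = 1 ∨ k % 6 = 5) → fibColorSum c (Nat.fib k) = -(1 / 2)) := by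
  intro k hk hkn
  rw [fibColorSum_fib hc h1 (by omega) hkn, fibSumPattern]
  refine ⟨?_, ?_, ?_⟩ <;> rintro (hm | hm) <;> norm_num [hm]

/-- Values of S(F_k) according to k mod 6, for any proper 2-coloring of G_n
with c(1) = 1 and F_k ≤ n, k ≥ 3. -/
theorem fibSumGraph_colorSum_fib (n : ℕ) (hn : 1 ≤ n) (c : ℕ → Fin 2)
    (hc : ∀ x y : FibVert n, (fibSumGraph n).Adj x y → c x.val ≠ c y.val)
    (h1 : c 1 = 1) :
    ∀ k : ℕ, 3 ≤ k → Nat.fib k ≤ n →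
      ((k % 6 = 0 ∨ k % 6 = 3) → fibColorSum c (Nat.fib k) = 0) ∧
      ((k % 6 = 2 ∨ k % 6 = 4) → fibColorSum c (Nat.fib k) = 1 / 2) ∧
      ((k % 6 = 1 ∨ k % 6 = 5) → fibColorSum c (Nat.fib k) = -(1 / 2)) :=
  fibSumGraph_colorSum_fib_general n c hc h1
end

section
/- Let n ≥ 1 and let c : {1, ..., n} → {0, 1} be a proper 2-coloring of the Fibonacci-sum graph G_n with c(1) = 1, and define S(N) = (Σ_{i=1}^{N} c(i)) − N/2 as a rational number, with S(0) = 0. Let N ≤ n and k be integers with F_k < N < F_{k+1}. If k ≡ 0, 2, 3, or 5 (mod 6), or if k ≡ 1 or 4 (mod 6) and N < F_{k+2}/2, then S(N) = S(F_k) + S(N − F_k). -/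
/-!
Write `F = F_k` and `G = F_{k-1}`, so `F + G = F_{k+1}`. For `1 ≤ j ≤ N - F` the vertex `G - j`
is adjacent both to `j` (sum `G`) and to `F + j` (sum `F_{k+1}`), so a proper 2-coloring gives
`c (F + j) = c j` as long as these two neighbours of `G - j` are not `G - j` itself, i.e.
`2 j ≠ G`. That is automatic when `G` is odd, i.e. `3 ∤ k - 1`, and otherwise it is what the bound
`2 N < F_{k+2} = 2 F + G` guarantees. The colors of `F + 1, …, N` thus repeat those of
`1, …, N - F`, which is the additivity of `S`.
-/

theorem Nat.even_fib_iff_three_dvd (n : ℕ) : Even (Nat.fib n) ↔ 3 ∣ n := by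
  constructor
  · intro h
    have hgcd : Nat.fib (Nat.gcd n 3) = 2 := by
      rw [Nat.fib_gcd, show Nat.fib 3 = 2 from rfl]
      exact Nat.gcd_eq_right (even_iff_two_dvd.mp h)
    rcases (Nat.dvd_prime Nat.prime_three).mp (Nat.gcd_dvd_right n 3) with h1 | h3
    · simp [h1] at hgcd
    · exact h3 ▸ Nat.gcd_dvd_left n 3
  · intro h
    exact even_iff_two_dvd.mpr (Nat.fib_dvd 3 n h)

lemma Fin.two_eq_of_ne_of_ne {a b d : Fin 2} (ha : a ≠ b) (hd : d ≠ b) : a = d := by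
  omega

lemma fibColorSum_succ (c : ℕ → Fin 2) (N : ℕ) :
    fibColorSum c (N + 1) = fibColorSum c N + ((c (N + 1)).val - 1 / 2) := by
  simp only [fibColorSum, Finset.sum_Icc_succ_top (Nat.le_add_left 1 N)]
  push_cast
  ring

lemma fibColorSum_add_of_shift (c : ℕ → Fin 2) (a : ℕ) {b : ℕ}
    (hshift : ∀ j, 1 ≤ j → j ≤ b → c (a + j) = c j) :
    fibColorSum c (a + b) = fibColorSum c a + fibColorSum c b := by
  induction b with
  | zero => simp [fibColorSum]
  | succ b ih =>
    rw [← add_assoc, fibColorSum_succ, fibColorSum_succ, add_assoc a b 1,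
      hshift (b + 1) le_add_self le_rfl, ih fun j hj hjb => hshift j hj (hjb.trans (Nat.le_succ b))]
    ring

section ProperColoring

variable {n : ℕ} {c : ℕ → Fin 2}
  (hc : ∀ x y : FibVert n, (fibSumGraph n).Adj x y → c x.val ≠ c y.val)
include hc

lemma color_ne_of_add_eq_fib {i j m : ℕ} (hi : 1 ≤ i) (hin : i ≤ n) (hj : 1 ≤ j) (hjn : j ≤ n)
    (hij : i ≠ j) (hsum : i + j = Nat.fib m) : c i ≠ c j :=
  hc ⟨i, hi, hin⟩ ⟨j, hj, hjn⟩ ⟨fun h => hij (congrArg Subtype.val h), m, hsum.symm⟩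

lemma color_fib_succ_add_eq {m j : ℕ} (hj : 1 ≤ j) (hjm : j < Nat.fib m)
    (hmid : 2 * j ≠ Nat.fib m) (hjn : Nat.fib (m + 1) + j ≤ n) :
    c (Nat.fib (m + 1) + j) = c j := by
  have hmono : Nat.fib m ≤ Nat.fib (m + 1) := Nat.fib_le_fib_succ
  have hfib : Nat.fib (m + 2) = Nat.fib m + Nat.fib (m + 1) := Nat.fib_add_two
  have hfar : c (Nat.fib (m + 1) + j) ≠ c (Nat.fib m - j) :=
    color_ne_of_add_eq_fib hc (m := m + 2) (by omega) hjn (by omega) (by omega) (by omega)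
      (by omega)
  have hnear : c j ≠ c (Nat.fib m - j) :=
    color_ne_of_add_eq_fib hc (m := m) hj (by omega) (by omega) (by omega) (by omega) (by omega)
  exact Fin.two_eq_of_ne_of_ne hfar hnear

end ProperColoring

theorem fibSumGraph_colorSum_additive_general (n : ℕ) (c : ℕ → Fin 2)
    (hc : ∀ x y : FibVert n, (fibSumGraph n).Adj x y → c x.val ≠ c y.val)
    (N k : ℕ) (hN : N ≤ n)
    (hk1 : Nat.fib k < N) (hk2 : N < Nat.fib (k + 1))
    (hcase : (k % 6 = 0 ∨ k % 6 = 2 ∨ k % 6 = 3 ∨ k % 6 = 5) ∨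
      ((k % 6 = 1 ∨ k % 6 = 4) ∧ 2 * N < Nat.fib (k + 2))) :
    fibColorSum c N =
      fibColorSum c (Nat.fib k) + fibColorSum c (N - Nat.fib k) := by
  obtain ⟨m, rfl⟩ : ∃ m, k = m + 1 :=
    Nat.exists_eq_succ_of_ne_zero fun hk => by
      subst hk
      rw [Nat.fib_zero] at hk1
      rw [zero_add, Nat.fib_one] at hk2
      omega
  have hfib₂ : Nat.fib (m + 1 + 1) = Nat.fib m + Nat.fib (m + 1) := Nat.fib_add_two
  have hfib₃ : Nat.fib (m + 1 + 2) = Nat.fib (m + 1) + Nat.fib (m + 1 + 1) := Nat.fib_add_two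
  have hmid : ∀ j ≤ N - Nat.fib (m + 1), 2 * j ≠ Nat.fib m := by
    rcases hcase with hk | ⟨-, hN2⟩
    · have hodd : ¬ Even (Nat.fib m) := by
        rw [Nat.even_fib_iff_three_dvd]
        omega
      intro j _ hj
      exact hodd ⟨j, by omega⟩
    · omega
  have hshift := fibColorSum_add_of_shift c (Nat.fib (m + 1)) fun j hj hjb =>
    color_fib_succ_add_eq hc hj (by omega) (hmid j hjb) (by omega)
  rwa [Nat.add_sub_cancel' hk1.le] at hshift

/-- Additivity S(N) = S(F_k) + S(N - F_k) under the stated congruence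
conditions on k, for F_k < N < F_{k+1}, N ≤ n. -/
theorem fibSumGraph_colorSum_additive (n : ℕ) (hn : 1 ≤ n) (c : ℕ → Fin 2)
    (hc : ∀ x y : FibVert n, (fibSumGraph n).Adj x y → c x.val ≠ c y.val)
    (h1 : c 1 = 1) (N k : ℕ) (hN : N ≤ n)
    (hk1 : Nat.fib k < N) (hk2 : N < Nat.fib (k + 1))
    (hcase : (k % 6 = 0 ∨ k % 6 = 2 ∨ k % 6 = 3 ∨ k % 6 = 5) ∨
      ((k % 6 = 1 ∨ k % 6 = 4) ∧ 2 * N < Nat.fib (k + 2))) :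
    fibColorSum c N =
      fibColorSum c (Nat.fib k) + fibColorSum c (N - Nat.fib k) :=
  fibSumGraph_colorSum_additive_general n c hc N k hN hk1 hk2 hcase
end

section
/- For every n ≥ 7, the girth of the Fibonacci-sum graph G_n is 4 (that is, G_n contains a cycle of length 4 and contains no cycle of length 3). -/
/-!
If `0 < x < y < z` had pairwise Fibonacci sums, then `x + y < x + z < y + z` would be three
Fibonacci numbers with the largest smaller than the sum of the other two. This is impossible,
because two Fibonacci numbers below a third one sum to at most that one. Hence `G_n` is
triangle-free, while `1, 2, 6, 7` is a 4-cycle (with sums `3, 8, 13, 8`) as soon as `n ≥ 7`.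
-/

namespace SimpleGraph

variable {α : Type*} {G : SimpleGraph α}

theorem egirth_le_four {a b c d : α} (hab : G.Adj a b) (hbc : G.Adj b c) (hcd : G.Adj c d)
    (hda : G.Adj d a) (hac : a ≠ c) (hbd : b ≠ d) : G.egirth ≤ 4 := by
  have hw : (Walk.cons hab (.cons hbc (.cons hcd (.cons hda .nil)))).IsCycle := by
    aesop (add simp Walk.cons_isCycle_iff)
  simpa using egirth_le_length hw

theorem four_le_egirth_of_cliqueFree_three (hG : G.CliqueFree 3) : 4 ≤ G.egirth := by
  refine le_egirth.mpr fun a w hw ↦ ?_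
  have hw3 : w.length ≠ 3 := fun h3 ↦
    let ⟨s, hs⟩ := is3Clique_iff_exists_cycle_length_three.mpr ⟨a, w, hw, h3⟩
    hG s hs
  exact_mod_cast (by have := hw.three_le_length; omega : 4 ≤ w.length)

theorem girth_eq_four (hG : G.CliqueFree 3) {a b c d : α} (hab : G.Adj a b) (hbc : G.Adj b c)
    (hcd : G.Adj c d) (hda : G.Adj d a) (hac : a ≠ c) (hbd : b ≠ d) : G.girth = 4 := by
  simp [girth, le_antisymm (egirth_le_four hab hbc hcd hda hac hbd)
    (four_le_egirth_of_cliqueFree_three hG)]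

end SimpleGraph

namespace Nat

theorem fib_add_fib_le_fib {p q r : ℕ} (hpq : fib p < fib q) (hqr : fib q < fib r) :
    fib p + fib q ≤ fib r := by
  have hpq' : p < q := fib_mono.reflect_lt hpq
  have hqr' : q < r := fib_mono.reflect_lt hqr
  obtain ⟨k, rfl⟩ : ∃ k, r = k + 2 := ⟨r - 2, by omega⟩
  have hp : fib p ≤ fib k := fib_mono (by omega)
  have hq : fib q ≤ fib (k + 1) := fib_mono (by omega)
  rw [fib_add_two]
  omega

theorem not_pairwise_sums_fib {x y z a b c : ℕ} (hx : 0 < x) (hxy : x < y) (hyz : y < z)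
    (ha : fib a = x + y) (hb : fib b = x + z) (hc : fib c = y + z) : False := by
  have := fib_add_fib_le_fib (p := a) (q := b) (r := c) (by omega) (by omega)
  omega

end Nat

theorem fibSumGraph_cliqueFree_three (n : ℕ) : (fibSumGraph n).CliqueFree 3 := by
  intro s hs
  obtain ⟨x, y, z, hxy, hxz, hyz, -⟩ := SimpleGraph.is3Clique_iff.mp hs
  clear hs
  wlog hlt_xy : x < y generalizing x y
  · exact this (x := y) (y := x) hxy.symm hyz hxz (hxy.ne.lt_or_gt.resolve_left hlt_xy)
  wlog hlt_xz : x < z generalizing x z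
  · have hzx := hxz.ne.lt_or_gt.resolve_left hlt_xz
    exact this (x := z) (z := x) hyz.symm hxz.symm hxy.symm (hzx.trans hlt_xy) hzx
  wlog hlt_yz : y < z generalizing y z
  · exact this (y := z) (z := y) hxz hxy hyz.symm hlt_xz hlt_xy
      (hyz.ne.lt_or_gt.resolve_left hlt_yz)
  obtain ⟨-, a, ha⟩ := hxy
  obtain ⟨-, b, hb⟩ := hxz
  obtain ⟨-, c, hc⟩ := hyz
  exact Nat.not_pairwise_sums_fib x.2.1 hlt_xy hlt_yz ha hb hc

/-- For every n ≥ 7 the girth of G_n is 4. -/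
theorem fibSumGraph_girth (n : ℕ) (hn : 7 ≤ n) :
    (fibSumGraph n).girth = 4 := by
  refine SimpleGraph.girth_eq_four (fibSumGraph_cliqueFree_three n)
    (a := ⟨1, by omega⟩) (b := ⟨2, by omega⟩) (c := ⟨6, by omega⟩) (d := ⟨7, by omega⟩)
    ?_ ?_ ?_ ?_ ?_ ?_
  exacts [⟨by simp, 4, rfl⟩, ⟨by simp, 6, rfl⟩, ⟨by simp, 7, rfl⟩, ⟨by simp, 6, rfl⟩,
    by simp, by simp]
end

section
/- For every k ≥ 2, the Fibonacci-sum graph G_n with n = F_{2k+3} − 1 contains a cycle of length 2k. -/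
/-!
The cycle is `1, F₄ - 1, F₅ + 1, F₆ - 1, …, F_{2k+1} + 1, F_{2k+2} - 1`.
The alternating `∓ 1`s cancel in the sum of two consecutive interior vertices, leaving
`F_{i+3} + F_{i+4} = F_{i+5}`; the first edge has sum `1 + (F₄ - 1) = F₄` and the
closing edge `(F_{2k+2} - 1) + 1 = F_{2k+2}`.
-/

open Nat

theorem fibSumGraph_exists_cycle_of_strictMono {n m : ℕ} (hm : 2 ≤ m) {f : ℕ → ℕ}
    (hf : StrictMono f) (h_one_le : 1 ≤ f 0) (h_le : f (m - 1) ≤ n)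
    (h_step : ∀ i, i + 1 < m → ∃ t, fib t = f i + f (i + 1))
    (h_close : ∃ t, fib t = f (m - 1) + f 0) :
    ∃ a : Fin m → FibVert n, Function.Injective a ∧
      ∀ i : Fin m,
        (fibSumGraph n).Adj (a i) (a ⟨(i.val + 1) % m, Nat.mod_lt _ (by omega)⟩) := by
  refine ⟨fun i ↦ ⟨f i, h_one_le.trans (hf.monotone (zero_le _)),
    (hf.monotone (by omega)).trans h_le⟩,
    fun i j hij ↦ Fin.ext (hf.injective congr(($hij).val)), ?_⟩
  intro ⟨i, hi⟩
  obtain ⟨h_ne, h_fib⟩ : f i ≠ f ((i + 1) % m) ∧ ∃ t, fib t = f i + f ((i + 1) % m) := by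
    rcases Nat.lt_or_ge (i + 1) m with h_lt | h_ge
    · rw [Nat.mod_eq_of_lt h_lt]
      exact ⟨(hf (Nat.lt_succ_self i)).ne, h_step i h_lt⟩
    · obtain rfl : i = m - 1 := by omega
      rw [Nat.sub_add_cancel (by omega), Nat.mod_self]
      exact ⟨(hf (by omega : 0 < m - 1)).ne', h_close⟩
  exact ⟨fun h ↦ h_ne congr(($h).val), h_fib⟩

def fibCycleVertex : ℕ → ℕ
  | 0 => 1
  | i + 1 => if Even i then fib (i + 4) - 1 else fib (i + 4) + 1

theorem fibCycleVertex_two_mul_add_one (j : ℕ) :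
    fibCycleVertex (2 * j + 1) = fib (2 * j + 4) - 1 := by
  simp [fibCycleVertex]

theorem fibCycleVertex_two_mul_add_two (j : ℕ) :
    fibCycleVertex (2 * j + 2) = fib (2 * j + 5) + 1 := by
  simp [fibCycleVertex]

theorem three_le_fib {m : ℕ} (hm : 4 ≤ m) : 3 ≤ fib m :=
  (fib_mono hm : fib 4 ≤ fib m)

theorem fibCycleVertex_strictMono : StrictMono fibCycleVertex := by
  refine strictMono_nat_of_lt_succ fun i ↦ ?_
  rcases i with _ | i
  · simp [fibCycleVertex, show fib 4 = 3 from rfl]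
  obtain ⟨j, rfl | rfl⟩ := Nat.even_or_odd' i
  · rw [fibCycleVertex_two_mul_add_one, fibCycleVertex_two_mul_add_two]
    have : fib (2 * j + 4) ≤ fib (2 * j + 5) := fib_le_fib_succ
    omega
  · rw [fibCycleVertex_two_mul_add_two, show 2 * j + 1 + 1 + 1 = 2 * (j + 1) + 1 by ring,
      fibCycleVertex_two_mul_add_one]
    have : fib (2 * (j + 1) + 4) = fib (2 * j + 4) + fib (2 * j + 5) := fib_add_two
    have := three_le_fib (m := 2 * j + 4) (by omega)
    omega

theorem fibCycleVertex_add_succ (i : ℕ) :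
    ∃ t, fib t = fibCycleVertex i + fibCycleVertex (i + 1) := by
  rcases i with _ | i
  · exact ⟨4, rfl⟩
  obtain ⟨j, rfl | rfl⟩ := Nat.even_or_odd' i
  · refine ⟨2 * j + 6, ?_⟩
    rw [fibCycleVertex_two_mul_add_one, fibCycleVertex_two_mul_add_two]
    have : fib (2 * j + 6) = fib (2 * j + 4) + fib (2 * j + 5) := fib_add_two
    have := three_le_fib (m := 2 * j + 4) (by omega)
    omega
  · refine ⟨2 * j + 7, ?_⟩
    rw [fibCycleVertex_two_mul_add_two, show 2 * j + 1 + 1 + 1 = 2 * (j + 1) + 1 by ring,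
      fibCycleVertex_two_mul_add_one]
    have : fib (2 * j + 7) = fib (2 * j + 5) + fib (2 * (j + 1) + 4) := fib_add_two
    have := three_le_fib (m := 2 * (j + 1) + 4) (by omega)
    omega

theorem fib_eq_fibCycleVertex_add_fibCycleVertex_zero (j : ℕ) :
    fib (2 * j + 4) = fibCycleVertex (2 * j + 1) + fibCycleVertex 0 := by
  rw [fibCycleVertex_two_mul_add_one, fibCycleVertex]
  have := three_le_fib (m := 2 * j + 4) (by omega)
  omega

/-- For every k ≥ 2 the graph G_n with n = F_{2k+3} - 1 contains a cycle of
length 2k (a sequence of 2k distinct vertices, cyclically consecutively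
adjacent). -/
theorem fibSumGraph_cycle_of_length (k : ℕ) (hk : 2 ≤ k) :
    ∃ a : Fin (2 * k) → FibVert (Nat.fib (2 * k + 3) - 1),
      Function.Injective a ∧
      ∀ i : Fin (2 * k),
        (fibSumGraph (Nat.fib (2 * k + 3) - 1)).Adj (a i)
          (a ⟨(i.val + 1) % (2 * k), Nat.mod_lt _ (by omega)⟩) := by
  obtain ⟨j, rfl⟩ : ∃ j, k = j + 1 := ⟨k - 1, by omega⟩
  have h_last : 2 * (j + 1) - 1 = 2 * j + 1 := by omega
  refine fibSumGraph_exists_cycle_of_strictMono (by omega) fibCycleVertex_strictMono le_rfl ?_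
    (fun i _ ↦ fibCycleVertex_add_succ i)
    ⟨2 * j + 4, h_last ▸ fib_eq_fibCycleVertex_add_fibCycleVertex_zero j⟩
  rw [h_last, fibCycleVertex_two_mul_add_one]
  exact Nat.sub_le_sub_right (fib_mono (by omega)) 1
end

section
/- For every n ≥ 1, every cycle of length at least 6 in the Fibonacci-sum graph G_n contains a chord having exactly two vertices of the cycle on one side; equivalently, every cycle (a_1, ..., a_m) with m ≥ 6 in G_n has four consecutive cycle vertices a_i, a_{i+1}, a_{i+2}, a_{i+3} (indices modulo m) such that {a_i, a_{i+3}} is an edge of G_n, so that these four vertices form a 4-cycle. -/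
/-!
Let `M` be the largest vertex of the cycle and `u < w` its two neighbours on the cycle, with
`y` the next vertex after `w`. Since `M < u + M < w + M < 2M`, both sums are consecutive
Fibonacci numbers `F_p` and `F_{p+1}`, so `w - u = F_{p-1}`. Then `F_{p-1} < w + y < F_{p+1}`
forces `w + y = F_p`, whence `u + y = F_p - F_{p-1} = F_{p-2}`: the vertices `u` and `y`, three
apart on the cycle, are adjacent.
-/

namespace Nat

theorem fib_eq_fib_add_one_of_lt_of_lt {a r : ℕ} (h₁ : fib a < fib r)
    (h₂ : fib r < fib (a + 2)) : fib r = fib (a + 1) := by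
  rcases lt_trichotomy r (a + 1) with h | rfl | h
  · exact absurd (fib_mono (show r ≤ a by omega)) h₁.not_ge
  · rfl
  · exact absurd (fib_mono (show a + 2 ≤ r by omega)) h₂.not_ge

theorem exists_fib_eq_add_of_lt {u w M y : ℕ} (hu : 0 < u) (huw : u < w) (hw : w < M)
    (hy : y < M) (huM : ∃ p, fib p = u + M) (hwM : ∃ q, fib q = w + M)
    (hwy : ∃ r, fib r = w + y) : ∃ t, fib t = u + y := by
  obtain ⟨p, hp⟩ := huM
  obtain ⟨q, hq⟩ := hwM
  obtain ⟨r, hr⟩ := hwy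
  obtain ⟨s, rfl⟩ : ∃ s, p = s + 2 := by
    have : ¬ p ≤ 1 := fun h => by have := fib_one ▸ fib_mono h; omega
    exact ⟨p - 2, by omega⟩
  have h₂ : fib (s + 2) = fib s + fib (s + 1) := fib_add_two
  have h₃ : fib (s + 3) = fib (s + 1) + fib (s + 2) := fib_add_two
  have h₄ : fib (s + 4) = fib (s + 2) + fib (s + 3) := fib_add_two
  have hq' : fib q = fib (s + 3) := by
    have := fib_le_fib_succ (n := s + 2)
    exact fib_eq_fib_add_one_of_lt_of_lt (a := s + 2) (by omega) (show fib q < fib (s + 4) by omega)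
  have hr' : fib r = fib (s + 2) :=
    fib_eq_fib_add_one_of_lt_of_lt (a := s + 1) (by omega) (show fib r < fib (s + 3) by omega)
  exact ⟨s, by omega⟩

theorem add_mod_ne_mod {m s d : ℕ} (hd : 0 < d) (hdm : d < m) : (s + d) % m ≠ s % m :=
  fun h => absurd (le_of_dvd hd (add_modEq_left_iff.mp h)) hdm.not_ge

end Nat

theorem fibSumGraph_adj_of_lt {n : ℕ} {u w M y : FibVert n} (huw : u.val < w.val)
    (hw : w.val < M.val) (hy : y.val < M.val) (huM : (fibSumGraph n).Adj u M)
    (hwM : (fibSumGraph n).Adj w M) (hwy : (fibSumGraph n).Adj w y) (huy : u ≠ y) :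
    (fibSumGraph n).Adj u y :=
  ⟨huy, Nat.exists_fib_eq_add_of_lt u.2.1 huw hw hy huM.2 hwM.2 hwy.2⟩

theorem fibSumGraph_adj_or_adj_of_path_max {n : ℕ} {v₀ v₁ M v₃ v₄ : FibVert n}
    (h₀₁ : (fibSumGraph n).Adj v₀ v₁) (h₁M : (fibSumGraph n).Adj v₁ M)
    (hM₃ : (fibSumGraph n).Adj M v₃) (h₃₄ : (fibSumGraph n).Adj v₃ v₄)
    (h₀ : v₀.val < M.val) (h₁ : v₁.val < M.val) (h₃ : v₃.val < M.val) (h₄ : v₄.val < M.val)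
    (h₀₃ : v₀ ≠ v₃) (h₁₃ : v₁ ≠ v₃) (h₁₄ : v₁ ≠ v₄) :
    (fibSumGraph n).Adj v₀ v₃ ∨ (fibSumGraph n).Adj v₁ v₄ := by
  rcases lt_or_gt_of_ne (Subtype.val_injective.ne h₁₃) with h | h
  · exact .inr (fibSumGraph_adj_of_lt h h₃ h₄ h₁M hM₃.symm h₃₄ h₁₄)
  · exact .inl (fibSumGraph_adj_of_lt h h₁ h₀ hM₃.symm h₁M h₀₁.symm h₀₃.symm).symm

/-- Every cycle of length at least 6 in G_n has four consecutive vertices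
a_i, a_{i+1}, a_{i+2}, a_{i+3} (indices mod m) with {a_i, a_{i+3}} an edge,
forming a 4-cycle. -/
theorem fibSumGraph_long_cycle_chord (n m : ℕ) (hm : 6 ≤ m)
    (a : Fin m → FibVert n) (ha : Function.Injective a)
    (hcyc : ∀ i : Fin m,
      (fibSumGraph n).Adj (a i) (a ⟨(i.val + 1) % m, Nat.mod_lt _ (by omega)⟩)) :
    ∃ i : Fin m,
      (fibSumGraph n).Adj (a i) (a ⟨(i.val + 3) % m, Nat.mod_lt _ (by omega)⟩) := by
  have hm₀ : 0 < m := by omega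
  let b (t : ℕ) : FibVert n := a ⟨t % m, Nat.mod_lt _ hm₀⟩
  have hb_adj (t : ℕ) : (fibSumGraph n).Adj (b t) (b (t + 1)) := by
    simpa only [b, Nat.mod_add_mod] using hcyc ⟨t % m, Nat.mod_lt _ hm₀⟩
  have hb_ne (s d : ℕ) (hd : 0 < d) (hdm : d < m) : b (s + d) ≠ b s :=
    fun h => Nat.add_mod_ne_mod hd hdm (congrArg Fin.val (ha h))
  obtain ⟨i, -, hi⟩ := Finset.univ.exists_max_image (fun j => (a j).val)
    ⟨⟨0, hm₀⟩, Finset.mem_univ _⟩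
  -- index the maximum as `d + 2` so that its predecessors need no truncated subtraction
  obtain ⟨d, hd⟩ : ∃ d, i.val + m = d + 2 := ⟨i.val + m - 2, by omega⟩
  have hbi : b (d + 2) = a i := by
    simp only [b, ← hd, Nat.add_mod_right, Nat.mod_eq_of_lt i.isLt]
  have hlt (t : ℕ) (ht : b t ≠ b (d + 2)) : (b t).val < (b (d + 2)).val :=
    lt_of_le_of_ne (hbi ▸ hi _ (Finset.mem_univ _)) (Subtype.val_injective.ne ht)
  rcases fibSumGraph_adj_or_adj_of_path_max (hb_adj d) (hb_adj (d + 1)) (hb_adj (d + 2))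
      (hb_adj (d + 3)) (hlt d (hb_ne d 2 two_pos (by omega)).symm)
      (hlt (d + 1) (hb_ne (d + 1) 1 one_pos (by omega)).symm)
      (hlt (d + 3) (hb_ne (d + 2) 1 one_pos (by omega)))
      (hlt (d + 4) (hb_ne (d + 2) 2 two_pos (by omega)))
      (hb_ne d 3 three_pos (by omega)).symm (hb_ne (d + 1) 2 two_pos (by omega)).symm
      (hb_ne (d + 1) 3 three_pos (by omega)).symm with h | h
  · exact ⟨⟨d % m, Nat.mod_lt _ hm₀⟩, by simpa only [b, Nat.mod_add_mod] using h⟩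
  · exact ⟨⟨(d + 1) % m, Nat.mod_lt _ hm₀⟩, by simpa only [b, Nat.mod_add_mod] using h⟩
end
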